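/- For every t with |t| ≤ π, |Λ₁(t)| ≤ 1 + 0.4(1−α)γ·Re(Ĥ(t)−1) − 0.2αγ; consequently |Λ₁(t)| ≤ exp(0.4(1−α)γ·Re(Ĥ(t)−1) − 0.2αγ). -/

import Mathlib

open Complex

noncomputable section

/-- `e^{a i t}` -/
def expi (a : ℂ) (t : ℝ) : ℂ := Complex.exp (a * Complex.I * (t : ℂ))

/-- `e^{it}` -/
def eit (t : ℝ) : ℂ := expi 1 t

/-- `D̂(t) = (1 − γ + βe^{it})² − 4e^{it}(β − γ(1−α))` -/
def Dhat (α β γ : ℝ) (t : ℝ) : ℂ :=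
  (1 - (γ : ℂ) + (β : ℂ) * eit t) ^ 2 - 4 * eit t * ((β : ℂ) - (γ : ℂ) * (1 - (α : ℂ)))

/-- The square root of `D̂(t)` with positive real part (junk value `0` if none exists). -/
def sqrtD (α β γ : ℝ) (t : ℝ) : ℂ :=
  letI := Classical.propDecidable (∃ s : ℂ, s ^ 2 = Dhat α β γ t ∧ 0 < s.re)
  if h : ∃ s : ℂ, s ^ 2 = Dhat α β γ t ∧ 0 < s.re then h.choose else 0

def Lam1 (α β γ : ℝ) (t : ℝ) : ℂ := (1 - (γ : ℂ) + (β : ℂ) * eit t + sqrtD α β γ t) / 2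

def Lam2 (α β γ : ℝ) (t : ℝ) : ℂ := (1 - (γ : ℂ) + (β : ℂ) * eit t - sqrtD α β γ t) / 2

/-- Common numerator of `Ŵ₁, Ŵ₂, V̂, V̂₁, V̂₂` with `L` in place of `Λ_j` (resp. `Δ̂`). -/
def Wnum (α β γ : ℝ) (d : ℕ) (L : ℂ) (t : ℝ) : ℂ :=
  (expi ((d : ℂ) + 1) t - 1) * ((β : ℂ) - (γ : ℂ) * (1 - (α : ℂ)))
    - (expi (d : ℂ) t - 1) * L
    + (eit t - 1) * ((γ : ℂ) * L - (β : ℂ) + (γ : ℂ) * (1 - (α : ℂ)))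

def W1denom (α β γ : ℝ) (d : ℕ) (t : ℝ) : ℂ :=
  (Lam1 α β γ t - expi (d : ℂ) t) * sqrtD α β γ t

def W2denom (α β γ : ℝ) (d : ℕ) (t : ℝ) : ℂ :=
  -((Lam2 α β γ t - expi (d : ℂ) t) * sqrtD α β γ t)

def W1 (α β γ : ℝ) (d : ℕ) (t : ℝ) : ℂ :=
  Wnum α β γ d (Lam1 α β γ t) t / W1denom α β γ d t

def W2 (α β γ : ℝ) (d : ℕ) (t : ℝ) : ℂ :=
  Wnum α β γ d (Lam2 α β γ t) t / W2denom α β γ d t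

def W3denom (α β γ : ℝ) (d : ℕ) (t : ℝ) : ℂ :=
  (expi ((d : ℂ) - 1) t - (β : ℂ)) * (expi (d : ℂ) t - (1 - (γ : ℂ)))
    - (γ : ℂ) * (1 - (α : ℂ) - (β : ℂ))

def W3 (α β γ : ℝ) (d : ℕ) (t : ℝ) : ℂ :=
  (α : ℂ) * (γ : ℂ) * expi (d : ℂ) t / W3denom α β γ d t

def Hhat (β : ℝ) (t : ℝ) : ℂ := (1 - (β : ℂ)) * eit t / (1 - (β : ℂ) * eit t)

def Psihat (α β : ℝ) (t : ℝ) : ℂ :=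
  (1 - (α : ℂ) - (β : ℂ)) * eit t / (1 - (β : ℂ) * eit t)

def A1 (α β γ : ℝ) (t : ℝ) : ℂ :=
  (1 - (β : ℂ)) * (Psihat α β t - 1) / (1 + (γ : ℂ) - (β : ℂ))

def A2 (α β γ : ℝ) (t : ℝ) : ℂ :=
  -((β : ℂ) * (1 - (β : ℂ)) * (Hhat β t - 1) * (Psihat α β t - 1)) / (1 + (γ : ℂ) - (β : ℂ)) ^ 2

def A3 (α β γ : ℝ) (t : ℝ) : ℂ :=
  (β : ℂ) ^ 2 * (1 - (β : ℂ)) * (Hhat β t - 1) ^ 2 * (Psihat α β t - 1)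
    / (1 + (γ : ℂ) - (β : ℂ)) ^ 3

def A4 (α β γ : ℝ) (t : ℝ) : ℂ :=
  -((1 - (β : ℂ)) ^ 3 * (Psihat α β t - 1) ^ 2)
    / ((1 + (γ : ℂ) - (β : ℂ)) ^ 3 * (1 - (β : ℂ) * eit t))

def A5 (α β γ : ℝ) (t : ℝ) : ℂ :=
  3 * (β : ℂ) * (1 - (β : ℂ)) ^ 3 * (Psihat α β t - 1) ^ 2 * (Hhat β t - 1)
    / ((1 + (γ : ℂ) - (β : ℂ)) ^ 4 * (1 - (β : ℂ) * eit t))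

def A6 (α β γ : ℝ) (t : ℝ) : ℂ :=
  2 * (1 - (β : ℂ)) ^ 5 * (Psihat α β t - 1) ^ 3
    / ((1 + (γ : ℂ) - (β : ℂ)) ^ 5 * (1 - (β : ℂ) * eit t) ^ 2)

def Ahat (α β γ : ℝ) (t : ℝ) : ℂ :=
  1 + A1 α β γ t * (γ : ℂ) + (A2 α β γ t + A4 α β γ t) * (γ : ℂ) ^ 2
    + (A3 α β γ t + A5 α β γ t + A6 α β γ t) * (γ : ℂ) ^ 3

def DeltaHat (α β γ : ℝ) (t : ℝ) : ℂ := 1 + A1 α β γ t * (γ : ℂ)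

def Delta1Hat (α β γ : ℝ) (t : ℝ) : ℂ :=
  1 + A1 α β γ t * (γ : ℂ) + (A2 α β γ t + A4 α β γ t) * (γ : ℂ) ^ 2

def Ghat (α β γ : ℝ) (t : ℝ) : ℂ :=
  Complex.exp (Ahat α β γ t - 1
    - (A1 α β γ t ^ 2 * (γ : ℂ) ^ 2
        + 2 * A1 α β γ t * (A2 α β γ t + A4 α β γ t) * (γ : ℂ) ^ 3) / 2
    + A1 α β γ t ^ 3 * (γ : ℂ) ^ 3 / 3)

def G1hat (α β γ : ℝ) (t : ℝ) : ℂ :=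
  Complex.exp (A1 α β γ t * (γ : ℂ)
    + (A2 α β γ t + A4 α β γ t - A1 α β γ t ^ 2 / 2) * (γ : ℂ) ^ 2)

def Vhat (α β γ : ℝ) (d : ℕ) (t : ℝ) : ℂ :=
  Wnum α β γ d (DeltaHat α β γ t) t /
    ((Ahat α β γ t - expi (d : ℂ) t)
      * (2 * DeltaHat α β γ t - 1 + (γ : ℂ) - (β : ℂ) * eit t))

def V1hat (α β γ : ℝ) (d : ℕ) (t : ℝ) : ℂ :=
  Wnum α β γ d (DeltaHat α β γ t) t /
    ((Delta1Hat α β γ t - expi (d : ℂ) t)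
      * (2 * DeltaHat α β γ t - 1 + (γ : ℂ) - (β : ℂ) * eit t))

def V2hat (α β γ : ℝ) (d : ℕ) (t : ℝ) : ℂ :=
  Wnum α β γ d (DeltaHat α β γ t) t /
    ((Delta1Hat α β γ t - expi (d : ℂ) t)
      * (2 * Delta1Hat α β γ t - 1 + (γ : ℂ) - (β : ℂ) * eit t))

/-- `f(1) = 0, f(2) = 1, f(3) = d` (states indexed `0,1,2`). -/
def fval (d : ℕ) : Fin 3 → ℤ := ![0, 1, (d : ℤ)]

/-- Transition matrix of the Markov chain. -/
def Pmat (α β γ : ℝ) : Fin 3 → Fin 3 → ℝ :=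
  ![![1 - γ, γ, 0], ![1 - α - β, β, α], ![0, 0, 1]]

/-- The path `(ξ₀, ξ₁, …, ξ_n)` obtained by prepending the initial (healthy) state. -/
def path (n : ℕ) (s : Fin n → Fin 3) : Fin (n + 1) → Fin 3 := Fin.cons 0 s

/-- `F_n{m}`: the mass the distribution of `f(ξ₁) + ⋯ + f(ξ_n)` puts on `m`,
for the chain started at the healthy state `0`. -/
def Fmass (α β γ : ℝ) (d n : ℕ) (m : ℤ) : ℝ :=
  ∑ s ∈ Finset.univ.filter (fun s : Fin n → Fin 3 => (∑ k, fval d (s k)) = m),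
    ∏ k : Fin n, Pmat α β γ (path n s k.castSucc) (path n s k.succ)

/-- The characteristic function `Σ_{m ∈ ℤ} F_n{m} e^{imt}` of `F_n`. -/
def charFn (α β γ : ℝ) (d n : ℕ) (t : ℝ) : ℂ :=
  ∑' m : ℤ, (Fmass α β γ d n m : ℂ) * expi (m : ℂ) t

/-- Mass at `k ∈ ℤ` of the signed measure associated with the Fourier transform `Mhat`. -/
def massOf (Mhat : ℝ → ℂ) (k : ℤ) : ℂ :=
  (1 / (2 * Real.pi)) *
    ∫ t in (-Real.pi)..Real.pi, Complex.exp (-(k : ℂ) * Complex.I * (t : ℂ)) * Mhat t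

/-- Fourier transform of the signed measure `GⁿV + E`. -/
def approxGnVE (α β γ : ℝ) (d n : ℕ) (t : ℝ) : ℂ :=
  Ghat α β γ t ^ n * Vhat α β γ d t + expi ((n : ℂ) * (d : ℂ)) t * W3 α β γ d t

/-- Fourier transform of the signed measure `G₁ⁿV₁ + E`. -/
def approxG1nV1E (α β γ : ℝ) (d n : ℕ) (t : ℝ) : ℂ :=
  G1hat α β γ t ^ n * V1hat α β γ d t + expi ((n : ℂ) * (d : ℂ)) t * W3 α β γ d t

/-- Fourier transform of the signed measure `G₁ⁿV₂ + E`. -/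
def approxG1nV2E (α β γ : ℝ) (d n : ℕ) (t : ℝ) : ℂ :=
  G1hat α β γ t ^ n * V2hat α β γ d t + expi ((n : ℂ) * (d : ℂ)) t * W3 α β γ d t

/-- Fourier transform of the signed measure `E`. -/
def approxE (α β γ : ℝ) (d n : ℕ) (t : ℝ) : ℂ :=
  expi ((n : ℂ) * (d : ℂ)) t * W3 α β γ d t

/-- Mass at `k` of the difference `F_n − M`, where `M` has Fourier transform `Mhat`. -/
def diffMass (α β γ : ℝ) (d n : ℕ) (Mhat : ℝ → ℂ) (k : ℤ) : ℂ :=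
  (Fmass α β γ d n k : ℂ) - massOf Mhat k

/-- Condition (C) of the paper. -/
def condC (C₀ α β γ : ℝ) : Prop :=
  0 < α ∧ α < 1 ∧ 0 < β ∧ β < 1 ∧ 0 < γ ∧ γ < 1 ∧
    β ≤ 0.15 ∧ γ ≤ 0.05 ∧ α ≤ C₀ ∧ α + β < 1

/-!
`Λ₁(t)` is a root of `z² - b z + c` with `b = 1 - γ + β e^{it}` and `c = q e^{it}`,
`q = β - γ(1-α)`. By the Schur–Cohn test, both roots lie in the closed disc of radius `r` once
`|c| < r²` and `r |b r² - b̄ c| ≤ r⁴ - |c|²`. Writing `b r² - b̄ c = A + B e^{it}` with real `A, B`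
and `u = 1 - cos t`, the squared second condition reads
`(r⁴ - q²)² - r² |A + B e^{it}|² = (r² - q)² P(r) Q(r) + 2 A B u r² ≥ 0`, where
`P(r) = r² - (1-γ+β) r + q` is the characteristic polynomial of the chain (`P(1) = αγ`) and
`Q(r) = r² + (1-γ+β) r + q`. For the radius `r = 1 - 0.2αγ - v`, `v = -0.4(1-α)γ Re(Ĥ(t)-1)`,
the factor `P(r)` is at worst `-1.05 v`, and this loss is paid for by `2 A B u r²`, because both
`v` and `u` are proportional to `1 - cos t`. The exponential bound is `1 + x ≤ eˣ`.
-/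

open ComplexConjugate

lemma norm_add_mul_sub_conj_mul_ge (z μ : ℂ) {r : ℝ} (hμ : ‖μ‖ ≤ r) (hz : r ≤ ‖z‖) :
    (‖z‖ + ‖μ‖) * (r ^ 2 - ‖z‖ * ‖μ‖)
      ≤ ‖(z + μ) * (r : ℂ) ^ 2 - conj (z + μ) * (z * μ)‖ := by
  have hid : (z + μ) * (r : ℂ) ^ 2 - conj (z + μ) * (z * μ)
      = z * ((r ^ 2 - ‖μ‖ ^ 2 : ℝ) : ℂ) - μ * ((‖z‖ ^ 2 - r ^ 2 : ℝ) : ℂ) := by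
    rw [map_add]
    push_cast
    linear_combination (-μ) * conj_mul' z - z * conj_mul' μ
  have hμ0 : 0 ≤ ‖μ‖ := norm_nonneg μ
  have hz' : ‖z * ((r ^ 2 - ‖μ‖ ^ 2 : ℝ) : ℂ)‖ = ‖z‖ * (r ^ 2 - ‖μ‖ ^ 2) := by
    rw [norm_mul, norm_real, Real.norm_of_nonneg (by nlinarith)]
  have hμ' : ‖μ * ((‖z‖ ^ 2 - r ^ 2 : ℝ) : ℂ)‖ = ‖μ‖ * (‖z‖ ^ 2 - r ^ 2) := by
    rw [norm_mul, norm_real, Real.norm_of_nonneg (by nlinarith)]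
  rw [hid]
  calc (‖z‖ + ‖μ‖) * (r ^ 2 - ‖z‖ * ‖μ‖)
      = ‖z * ((r ^ 2 - ‖μ‖ ^ 2 : ℝ) : ℂ)‖ - ‖μ * ((‖z‖ ^ 2 - r ^ 2 : ℝ) : ℂ)‖ := by
        rw [hz', hμ']; ring
    _ ≤ _ := norm_sub_norm_le _ _

/-- The Schur–Cohn stability test for a quadratic. -/
lemma norm_le_of_sq_sub_mul_add_eq_zero {b c z : ℂ} {r : ℝ} (hr : 0 < r)
    (hz : z ^ 2 - b * z + c = 0) (hc : ‖c‖ < r ^ 2)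
    (h : r * ‖b * (r : ℂ) ^ 2 - conj b * c‖ ≤ r ^ 4 - ‖c‖ ^ 2) : ‖z‖ ≤ r := by
  by_contra! hzr
  have hz0 : z ≠ 0 := by rintro rfl; simp at hzr; linarith
  obtain ⟨μ, rfl⟩ : ∃ μ, c = z * μ := ⟨c / z, by field_simp⟩
  obtain rfl : b = z + μ := mul_left_cancel₀ hz0 (by linear_combination -hz)
  rw [norm_mul] at h hc
  have hμ : ‖μ‖ < r := by nlinarith [norm_nonneg μ]
  have hlow := norm_add_mul_sub_conj_mul_ge z μ hμ.le hzr.le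
  have hgap : 0 < r ^ 2 - ‖z‖ * ‖μ‖ := by linarith
  have hsum : r * (‖z‖ + ‖μ‖) ≤ r ^ 2 + ‖z‖ * ‖μ‖ := by
    refine le_of_mul_le_mul_left ?_ hgap
    nlinarith [mul_le_mul_of_nonneg_left hlow hr.le]
  nlinarith [mul_pos (sub_pos.2 hzr) (sub_pos.2 hμ)]

lemma eit_eq_exp (t : ℝ) : eit t = cexp (t * I) := by
  simp only [eit, expi, one_mul, mul_comm I]

lemma norm_eit (t : ℝ) : ‖eit t‖ = 1 := by
  rw [eit_eq_exp, norm_exp_ofReal_mul_I]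

lemma eit_re (t : ℝ) : (eit t).re = Real.cos t := by
  rw [eit_eq_exp, exp_ofReal_mul_I_re]

lemma sq_norm_ofReal_add_ofReal_mul {w : ℂ} (hw : ‖w‖ = 1) (A B : ℝ) :
    ‖(A : ℂ) + B * w‖ ^ 2 = A ^ 2 + B ^ 2 + 2 * A * B * w.re := by
  have hw' : w.re ^ 2 + w.im ^ 2 = 1 := by
    have := Complex.sq_norm w
    rw [hw, normSq_apply] at this
    linear_combination -this
  rw [Complex.sq_norm, normSq_apply]
  simp only [add_re, ofReal_re, mul_re, ofReal_im, zero_mul, sub_zero, add_im, mul_im, zero_add]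
  linear_combination B ^ 2 * hw'

lemma Hhat_sub_one_re_mul {β : ℝ} (hβ0 : 0 ≤ β) (hβ1 : β < 1) (t : ℝ) :
    (Hhat β t - 1).re * ((1 - β) ^ 2 + 2 * β * (1 - Real.cos t))
      = -((1 + β) * (1 - Real.cos t)) := by
  have hre : (eit t).re = Real.cos t := eit_re t
  have him : (eit t).im = Real.sin t := by rw [eit_eq_exp, exp_ofReal_mul_I_im]
  have hD : normSq (1 - β * eit t) = (1 - β) ^ 2 + 2 * β * (1 - Real.cos t) := by
    rw [normSq_apply]
    simp only [sub_re, one_re, mul_re, ofReal_re, ofReal_im, zero_mul, sub_zero, sub_im, one_im,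
      mul_im, hre, him]
    linear_combination β ^ 2 * Real.sin_sq_add_cos_sq t
  have hD0 : 0 < (1 - β) ^ 2 + 2 * β * (1 - Real.cos t) := by
    nlinarith [mul_nonneg hβ0 (sub_nonneg.2 (Real.cos_le_one t))]
  have hne : 1 - β * eit t ≠ 0 := by
    rw [← normSq_pos, hD]; exact hD0
  have hH : Hhat β t - 1 = (eit t - 1) / (1 - β * eit t) := by
    rw [Hhat]; field_simp; ring
  rw [hH, div_re, hD, ← add_div, div_mul_cancel₀ _ hD0.ne']
  simp only [sub_re, one_re, mul_re, ofReal_re, ofReal_im, zero_mul, sub_zero, sub_im, one_im,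
    mul_im, hre, him]
  linear_combination (-β) * Real.sin_sq_add_cos_sq t

lemma mul_sq_sub_conj_mul_eq {w : ℂ} (hw : ‖w‖ = 1) (a β q r : ℝ) :
    ((a : ℂ) + β * w) * (r : ℂ) ^ 2 - conj ((a : ℂ) + β * w) * (w * q)
      = ((a * r ^ 2 - q * β : ℝ) : ℂ) + ((β * r ^ 2 - q * a : ℝ) : ℂ) * w := by
  have hw' : conj w * w = 1 := by rw [conj_mul', hw]; simp
  simp only [map_add, map_mul, conj_ofReal]
  push_cast
  linear_combination (-(β : ℂ) * q) * hw'

lemma sq_sqrtD {α β γ t : ℝ} (h : ∃ s : ℂ, s ^ 2 = Dhat α β γ t ∧ 0 < s.re) :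
    sqrtD α β γ t ^ 2 = Dhat α β γ t := by
  rw [sqrtD, dif_pos h]
  exact h.choose_spec.1

lemma sqrtD_eq_zero {α β γ t : ℝ} (h : ¬∃ s : ℂ, s ^ 2 = Dhat α β γ t ∧ 0 < s.re) :
    sqrtD α β γ t = 0 := by
  rw [sqrtD, dif_neg h]

lemma Lam1_sq_sub_mul_add_eq_zero {α β γ t : ℝ}
    (h : ∃ s : ℂ, s ^ 2 = Dhat α β γ t ∧ 0 < s.re) :
    Lam1 α β γ t ^ 2 - (((1 - γ : ℝ) : ℂ) + β * eit t) * Lam1 α β γ t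
      + eit t * ((β - γ * (1 - α) : ℝ) : ℂ) = 0 := by
  have hs := sq_sqrtD h
  rw [Dhat] at hs
  rw [Lam1]
  push_cast
  linear_combination hs / 4

lemma norm_Lam1_le_of_not_exists {α β γ t : ℝ} (hβ : 0 ≤ β) (hγ : γ ≤ 1)
    (h : ¬∃ s : ℂ, s ^ 2 = Dhat α β γ t ∧ 0 < s.re) :
    ‖Lam1 α β γ t‖ ≤ (1 - γ + β) / 2 := by
  have hb : ‖((1 - γ : ℝ) : ℂ) + β * eit t‖ ≤ 1 - γ + β := by
    refine (norm_add_le _ _).trans_eq ?_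
    rw [norm_mul, norm_eit, norm_real, norm_real, Real.norm_of_nonneg (by linarith),
      Real.norm_of_nonneg hβ, mul_one]
  rw [Lam1, sqrtD_eq_zero h, add_zero, norm_div, RCLike.norm_ofNat]
  push_cast at hb
  linarith

structure SmallParams (α β γ : ℝ) : Prop where
  α_pos : 0 < α
  α_lt_one : α < 1
  β_pos : 0 < β
  β_le : β ≤ 0.15
  γ_pos : 0 < γ
  γ_le : γ ≤ 0.05

lemma SmallParams.of_condC {C₀ α β γ : ℝ} (h : condC C₀ α β γ) : SmallParams α β γ := by
  obtain ⟨hα0, hα1, hβ0, -, hγ0, -, hβ, hγ, -, -⟩ := h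
  exact ⟨hα0, hα1, hβ0, hβ, hγ0, hγ⟩

lemma nonneg_and_le_two_mul_of_mul_eq {β u v c : ℝ} (hβ0 : 0 ≤ β) (hβ1 : β < 1) (hu0 : 0 ≤ u)
    (hu2 : u ≤ 2) (hc : 0 ≤ c) (hv : v * ((1 - β) ^ 2 + 2 * β * u) = c * (1 + β) * u) :
    0 ≤ v ∧ v ≤ 2 * c := by
  have hD : 0 < (1 - β) ^ 2 + 2 * β * u := by nlinarith [mul_nonneg hβ0 hu0]
  constructor
  · nlinarith [mul_nonneg (mul_nonneg hc (by linarith : (0:ℝ) ≤ 1 + β)) hu0]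
  · have hbound : (1 + β) * u ≤ 2 * ((1 - β) ^ 2 + 2 * β * u) := by
      nlinarith [mul_nonneg (sq_nonneg (1 - β)) (by linarith : (0:ℝ) ≤ 2 - u),
        mul_nonneg (mul_nonneg hβ0 hu0) (by linarith : (0:ℝ) ≤ 1 + β)]
    refine le_of_mul_le_mul_right ?_ hD
    rw [hv]
    linarith [mul_le_mul_of_nonneg_left hbound hc]

namespace SmallParams

variable {α β γ u v r q : ℝ}

lemma radius_bounds (hp : SmallParams α β γ) (hv0 : 0 ≤ v) (hv1 : v ≤ 0.8 * γ * (1 - α))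
    (hr : r = 1 - 0.2 * α * γ - v) : 0.96 ≤ r ∧ r ≤ 1 := by
  have := hp.α_pos; have := hp.α_lt_one; have := hp.γ_pos; have := hp.γ_le
  constructor <;> nlinarith

lemma charPoly_ge_neg (hp : SmallParams α β γ) (hv0 : 0 ≤ v)
    (hr : r = 1 - 0.2 * α * γ - v) (hq : q = β - γ * (1 - α)) :
    -(1.05 * v) ≤ r ^ 2 - (1 - γ + β) * r + q := by
  have := hp.α_pos; have := hp.β_pos; have := hp.γ_pos; have := hp.γ_le
  have hP : r ^ 2 - (1 - γ + β) * r + q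
      = (0.2 * α * γ + v) ^ 2 + α * γ - (0.2 * α * γ + v) * (1 + γ - β) := by
    rw [hr, hq]; ring
  rw [hP]
  nlinarith [mul_nonneg hv0 (by linarith : (0:ℝ) ≤ 0.05 - γ + β),
    mul_nonneg (mul_pos ‹0 < α› ‹0 < γ›).le (by linarith : (0:ℝ) ≤ 0.05 - γ + β)]

lemma cofactor_bounds (hp : SmallParams α β γ) (hr0 : 0.96 ≤ r) (hr1 : r ≤ 1)
    (hq : q = β - γ * (1 - α)) :
    0 ≤ (r ^ 2 - q) ^ 2 * (r ^ 2 + (1 - γ + β) * r + q) ∧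
      (r ^ 2 - q) ^ 2 * (r ^ 2 + (1 - γ + β) * r + q) ≤ 2 * (1 + β) * (1.05 - β) ^ 2 := by
  have := hp.α_pos; have := hp.α_lt_one; have := hp.β_pos; have := hp.β_le
  have := hp.γ_pos; have := hp.γ_le
  have hγα : 0 ≤ γ * (1 - α) := by nlinarith
  have hγα' : γ * (1 - α) ≤ γ := by nlinarith
  have hd0 : 0 ≤ r ^ 2 - q := by nlinarith
  have hd1 : r ^ 2 - q ≤ 1.05 - β := by nlinarith
  have hQ0 : 0 ≤ r ^ 2 + (1 - γ + β) * r + q := by nlinarith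
  have hQ1 : r ^ 2 + (1 - γ + β) * r + q ≤ 2 * (1 + β) := by nlinarith
  have hsq : (r ^ 2 - q) ^ 2 ≤ (1.05 - β) ^ 2 := pow_le_pow_left₀ hd0 hd1 2
  refine ⟨mul_nonneg (sq_nonneg _) hQ0, ?_⟩
  nlinarith [mul_le_mul hsq hQ1 hQ0 (sq_nonneg _)]

lemma le_two_mul_constCoeff (hp : SmallParams α β γ) (hr : 0.96 ≤ r) (hq : q = β - γ * (1 - α)) :
    1.57 ≤ 2 * ((1 - γ) * r ^ 2 - q * β) * r ^ 2 := by
  have := hp.α_pos; have := hp.α_lt_one; have := hp.β_pos; have := hp.β_le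
  have := hp.γ_pos; have := hp.γ_le
  have hqβ : q * β ≤ 0.0225 := by rw [hq]; nlinarith [mul_pos ‹0 < γ› ‹0 < β›]
  have hr2 : 0.9216 ≤ r ^ 2 := by nlinarith
  have hA : 0.853 ≤ (1 - γ) * r ^ 2 - q * β := by nlinarith
  nlinarith

lemma eitCoeffLower_le (hp : SmallParams α β γ) (hr : r = 1 - 0.2 * α * γ - v)
    (hq : q = β - γ * (1 - α)) :
    0.95 * γ * (1 - α) + 0.6 * β * γ - 2 * β * v ≤ β * r ^ 2 - q * (1 - γ) := by
  have := hp.α_pos; have := hp.α_lt_one; have := hp.β_pos; have := hp.γ_pos; have := hp.γ_le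
  have hB : β * r ^ 2 - q * (1 - γ) = β * (γ - 2 * (0.2 * α * γ + v) + (0.2 * α * γ + v) ^ 2)
      + γ * (1 - α) * (1 - γ) := by rw [hr, hq]; ring
  rw [hB]
  nlinarith [mul_nonneg ‹0 < β›.le (sq_nonneg (0.2 * α * γ + v)),
    mul_nonneg (mul_pos ‹0 < β› ‹0 < γ›).le (by linarith : (0:ℝ) ≤ 1 - α),
    mul_nonneg (mul_nonneg ‹0 < γ›.le (by linarith : (0:ℝ) ≤ 1 - α))
      (by linarith : (0:ℝ) ≤ 0.05 - γ)]

lemma eitCoeffLower_nonneg (hp : SmallParams α β γ) (hv : v ≤ 0.8 * γ * (1 - α)) :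
    0 ≤ 0.95 * γ * (1 - α) + 0.6 * β * γ - 2 * β * v := by
  have := hp.α_lt_one; have := hp.β_pos; have := hp.β_le; have := hp.γ_pos
  have hγα : 0 ≤ γ * (1 - α) := by nlinarith
  nlinarith [mul_le_mul_of_nonneg_left hv ‹0 < β›.le, mul_pos ‹0 < β› ‹0 < γ›]

lemma cofactorBound_mul_le (hp : SmallParams α β γ) (hu : 0 ≤ u)
    (hv : v * ((1 - β) ^ 2 + 2 * β * u) = 0.4 * (1 - α) * γ * (1 + β) * u) :
    1.05 * (2 * (1 + β) * (1.05 - β) ^ 2) * v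
      ≤ 1.57 * u * (0.95 * γ * (1 - α) + 0.6 * β * γ - 2 * β * v) := by
  have := hp.α_lt_one; have := hp.β_pos; have := hp.β_le; have := hp.γ_pos
  have hD : 0 < (1 - β) ^ 2 + 2 * β * u := by nlinarith [mul_nonneg ‹0 < β›.le hu]
  have hpoly : 0 ≤ 1.4915 * ((1 - β) ^ 2 + 2 * β * u) - 1.256 * β * (1 + β) * u
      - 0.84 * (1 + β) ^ 2 * (1.05 - β) ^ 2 := by
    nlinarith [mul_nonneg (mul_nonneg ‹0 < β›.le (by linarith : (0:ℝ) ≤ 0.15 - β)) hu,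
      mul_nonneg ‹0 < β›.le hu, mul_nonneg ‹0 < β›.le (by linarith : (0:ℝ) ≤ 0.15 - β)]
  -- clear the denominator `|1 - β e^{it}|² = (1 - β)² + 2βu` of `v`
  have hid : (1.57 * u * (0.95 * γ * (1 - α) + 0.6 * β * γ - 2 * β * v)
      - 1.05 * (2 * (1 + β) * (1.05 - β) ^ 2) * v) * ((1 - β) ^ 2 + 2 * β * u)
      = u * γ * ((1 - α) * (1.4915 * ((1 - β) ^ 2 + 2 * β * u) - 1.256 * β * (1 + β) * u
        - 0.84 * (1 + β) ^ 2 * (1.05 - β) ^ 2) + 0.942 * β * ((1 - β) ^ 2 + 2 * β * u)) := by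
    linear_combination (-(3.14 * β * u) - 1.05 * (2 * (1 + β) * (1.05 - β) ^ 2)) * hv
  have hpos : 0 ≤ u * γ * ((1 - α) * (1.4915 * ((1 - β) ^ 2 + 2 * β * u)
      - 1.256 * β * (1 + β) * u - 0.84 * (1 + β) ^ 2 * (1.05 - β) ^ 2)
      + 0.942 * β * ((1 - β) ^ 2 + 2 * β * u)) := by
    have : 0 ≤ 1 - α := by linarith
    positivity
  nlinarith

lemma schurCohn_conditions (hp : SmallParams α β γ) (hu0 : 0 ≤ u) (hu2 : u ≤ 2)
    (hv : v * ((1 - β) ^ 2 + 2 * β * u) = 0.4 * (1 - α) * γ * (1 + β) * u)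
    (hr : r = 1 - 0.2 * α * γ - v) (hq : q = β - γ * (1 - α)) :
    0.96 ≤ r ∧ |q| < r ^ 2 ∧
      r ^ 2 * (((1 - γ) * r ^ 2 - q * β) ^ 2 + (β * r ^ 2 - q * (1 - γ)) ^ 2
        + 2 * ((1 - γ) * r ^ 2 - q * β) * (β * r ^ 2 - q * (1 - γ)) * (1 - u))
        ≤ (r ^ 4 - q ^ 2) ^ 2 := by
  obtain ⟨hv0, hv1⟩ : 0 ≤ v ∧ v ≤ 2 * (0.4 * (1 - α) * γ) := by
    refine nonneg_and_le_two_mul_of_mul_eq hp.β_pos.le (by linarith [hp.β_le]) hu0 hu2 ?_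
      (by linarith)
    nlinarith [hp.α_lt_one, hp.γ_pos]
  obtain ⟨hr_ge, hr_le⟩ := hp.radius_bounds hv0 (by linarith) hr
  have hq1 : |q| < r ^ 2 := by
    have := hp.α_pos; have := hp.α_lt_one; have := hp.β_pos; have := hp.β_le
    have := hp.γ_pos; have := hp.γ_le
    have hγα : γ * (1 - α) ≤ γ := by nlinarith
    have hγα' : 0 ≤ γ * (1 - α) := by nlinarith
    rw [abs_lt]; constructor <;> nlinarith
  refine ⟨hr_ge, hq1, ?_⟩
  have hP := hp.charPoly_ge_neg hv0 hr hq
  obtain ⟨hx0, hxK⟩ := hp.cofactor_bounds hr_ge hr_le hq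
  have hA := hp.le_two_mul_constCoeff hr_ge hq
  have hB := hp.eitCoeffLower_le hr hq
  have hX := hp.eitCoeffLower_nonneg (v := v) (by linarith)
  have hKX := hp.cofactorBound_mul_le hu0 hv
  set A := (1 - γ) * r ^ 2 - q * β
  set B := β * r ^ 2 - q * (1 - γ)
  set X := 0.95 * γ * (1 - α) + 0.6 * β * γ - 2 * β * v
  set K := 2 * (1 + β) * (1.05 - β) ^ 2
  set P := r ^ 2 - (1 - γ + β) * r + q
  set x := (r ^ 2 - q) ^ 2 * (r ^ 2 + (1 - γ + β) * r + q)
  have hF : (r ^ 4 - q ^ 2) ^ 2 - r ^ 2 * (A ^ 2 + B ^ 2 + 2 * A * B * (1 - u))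
      = x * P + (2 * A * r ^ 2) * B * u := by ring
  have h1 : -(K * (1.05 * v)) ≤ x * P :=
    calc -(K * (1.05 * v)) ≤ -(x * (1.05 * v)) := by
          have := mul_le_mul_of_nonneg_right hxK (by linarith : (0:ℝ) ≤ 1.05 * v); linarith
      _ ≤ x * P := by have := mul_le_mul_of_nonneg_left hP hx0; linarith
  have h2 : 1.57 * u * X ≤ (2 * A * r ^ 2) * B * u := by
    have := mul_le_mul_of_nonneg_right (mul_le_mul hA hB hX (by linarith)) hu0
    linarith
  linarith

lemma norm_Lam1_le (hp : SmallParams α β γ) (t : ℝ) :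
    ‖Lam1 α β γ t‖ ≤ 1 + 0.4 * (1 - α) * γ * (Hhat β t - 1).re - 0.2 * α * γ := by
  set r := 1 + 0.4 * (1 - α) * γ * (Hhat β t - 1).re - 0.2 * α * γ with hr_def
  set v := -(0.4 * (1 - α) * γ * (Hhat β t - 1).re) with hv_def
  set q := β - γ * (1 - α)
  have hv : v * ((1 - β) ^ 2 + 2 * β * (1 - Real.cos t))
      = 0.4 * (1 - α) * γ * (1 + β) * (1 - Real.cos t) := by
    linear_combination (-(0.4 * (1 - α) * γ)) *
      Hhat_sub_one_re_mul hp.β_pos.le (by linarith [hp.β_le]) t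
  have hr : r = 1 - 0.2 * α * γ - v := by rw [hr_def, hv_def]; ring
  clear_value r v
  obtain ⟨hr_ge, hq, hmain⟩ := hp.schurCohn_conditions (sub_nonneg.2 (Real.cos_le_one t))
    (by linarith [Real.neg_one_le_cos t]) hv hr rfl
  rw [sub_sub_cancel] at hmain
  by_cases hex : ∃ s : ℂ, s ^ 2 = Dhat α β γ t ∧ 0 < s.re
  · have hc : ‖eit t * (q : ℂ)‖ = |q| := by
      rw [norm_mul, norm_eit, norm_real, one_mul, Real.norm_eq_abs]
    refine norm_le_of_sq_sub_mul_add_eq_zero (by linarith) (Lam1_sq_sub_mul_add_eq_zero hex)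
      (hc ▸ hq) ?_
    rw [hc, sq_abs, mul_sq_sub_conj_mul_eq (norm_eit t)]
    refine (pow_le_pow_iff_left₀ (by positivity) ?_ two_ne_zero).1 ?_
    · have := pow_lt_pow_left₀ hq (abs_nonneg q) two_ne_zero
      rw [sq_abs] at this
      linarith
    · rw [mul_pow, sq_norm_ofReal_add_ofReal_mul (norm_eit t), eit_re]
      exact hmain
  · refine (norm_Lam1_le_of_not_exists hp.β_pos.le (by linarith [hp.γ_le]) hex).trans ?_
    linarith [hp.β_le, hp.γ_pos]

end SmallParams

theorem stmt3_general (C₀ : ℝ)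
    (α β γ : ℝ) (h : condC C₀ α β γ) (t : ℝ) :
    ‖Lam1 α β γ t‖ ≤ 1 + 0.4 * (1 - α) * γ * (Hhat β t - 1).re - 0.2 * α * γ ∧
    ‖Lam1 α β γ t‖ ≤ Real.exp (0.4 * (1 - α) * γ * (Hhat β t - 1).re - 0.2 * α * γ) := by
  have hΛ := (SmallParams.of_condC h).norm_Lam1_le t
  refine ⟨hΛ, hΛ.trans ?_⟩
  linarith [Real.add_one_le_exp (0.4 * (1 - α) * γ * (Hhat β t - 1).re - 0.2 * α * γ)]

/-- `|Λ₁(t)| ≤ 1 + 0.4(1−α)γ Re(Ĥ(t)−1) − 0.2αγ ≤ exp(...)`. -/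
theorem stmt3 (C₀ : ℝ) (hC₀ : C₀ ∈ Set.Ioo (0 : ℝ) 1)
    (α β γ : ℝ) (h : condC C₀ α β γ) (t : ℝ) (ht : |t| ≤ Real.pi) :
    ‖Lam1 α β γ t‖ ≤ 1 + 0.4 * (1 - α) * γ * (Hhat β t - 1).re - 0.2 * α * γ ∧
    ‖Lam1 α β γ t‖ ≤ Real.exp (0.4 * (1 - α) * γ * (Hhat β t - 1).re - 0.2 * α * γ) :=
  stmt3_general C₀ α β γ h t
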